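/- arXiv:2311.06428 — 5 statements merged into one kernel-verified Lean document; each statement's English description precedes it below -/
import Mathlib

section
/- Let σ_1, ..., σ_k be independent random variables each uniform on {-1, +1}. Then E[|σ_1 + ... + σ_k|] ≥ √(k/2). -/
open Finset

-- central binomial lower bound: 16^m ≤ 4m * (centralBinom m)^2 for m ≥ 1
lemma cb_ineq : ∀ m : ℕ, 1 ≤ m → 16 ^ m ≤ 4 * m * (Nat.centralBinom m) ^ 2 := by
  intro m hm
  induction m with
  | zero => omega
  | succ n ih =>
    rcases Nat.eq_or_lt_of_le hm with h | h
    · simp [← h, Nat.centralBinom]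
    · have hn : 1 ≤ n := by omega
      have IH := ih hn
      have key := Nat.succ_mul_centralBinom_succ n
      -- work in ℕ multiplied by (n+1)^2
      have h2 : (n+1)^2 * (4 * (n+1) * Nat.centralBinom (n+1) ^ 2)
          = 4 * (n+1) * (2*(2*n+1))^2 * Nat.centralBinom n ^ 2 := by
        have : ((n+1) * Nat.centralBinom (n+1))^2 = (2*(2*n+1) * Nat.centralBinom n)^2 := by
          rw [key]
        ring_nf
        ring_nf at this
        nlinarith [this]
      have h3 : (n+1)^2 * 16 ^ (n+1) ≤ (n+1)^2 * (4 * (n+1) * Nat.centralBinom (n+1) ^ 2) := by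
        rw [h2]
        calc (n+1)^2 * 16^(n+1) = 16 * (n+1)^2 * 16^n := by ring
          _ ≤ 16 * (n+1)^2 * (4 * n * Nat.centralBinom n ^ 2) := by
              exact Nat.mul_le_mul_left _ IH
          _ ≤ 4 * (n+1) * (2*(2*n+1))^2 * Nat.centralBinom n ^ 2 := by nlinarith
      exact Nat.le_of_mul_le_mul_left h3 (by positivity)


lemma term_id (n j : ℕ) (hj : 1 ≤ j) :
    (2 * (j:ℤ) - n) * n.choose j
      = (n:ℤ) * (n-1).choose (j-1) - (n:ℤ) * (n-1).choose j := by
  obtain ⟨j, rfl⟩ := Nat.exists_eq_add_of_le hj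
  rcases n with _ | n
  · simp [Nat.choose_eq_zero_of_lt (by omega : 0 < 1 + j)]
  · have h1' : ((n:ℤ)+1) * Nat.choose n j = Nat.choose (n+1) (j+1) * ((j:ℤ)+1) := by
      exact_mod_cast Nat.add_one_mul_choose_eq n j
    have h2' : (Nat.choose (n+1) (j+1) : ℤ) = Nat.choose n j + Nat.choose n (j+1) := by
      exact_mod_cast Nat.choose_succ_succ n j
    have e1 : 1 + j = j + 1 := by omega
    rw [e1]
    simp only [Nat.add_sub_cancel]
    push_cast
    linear_combination (-2)*h1' - ((n:ℤ)+1)*h2'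

lemma telescope (n m : ℕ) (hm : 1 ≤ m) (hmn : m ≤ n + 1) :
    ∑ j ∈ Ico m (n+1), (2 * (j:ℤ) - n) * n.choose j
      = (n:ℤ) * (n-1).choose (m-1) := by
  rw [Finset.sum_Ico_eq_sum_range]
  have key : ∀ i ∈ Finset.range (n + 1 - m),
      (2 * ((m + i : ℕ):ℤ) - n) * n.choose (m+i)
        = (fun i => (n:ℤ) * (n-1).choose (m-1+i)) i
          - (fun i => (n:ℤ) * (n-1).choose (m-1+i)) (i+1) := by
    intro i _
    have h := term_id n (m+i) (by omega)
    have e1 : m + i - 1 = m - 1 + i := by omega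
    have e2 : m + i = m - 1 + (i + 1) := by omega
    simp only [h, e1]
    rw [e2]
  rw [Finset.sum_congr rfl key, Finset.sum_range_sub']
  have e3 : m - 1 + (n + 1 - m) = n := by omega
  rw [e3]
  rcases Nat.eq_zero_or_pos n with rfl | hn
  · simp
  · rw [Nat.choose_eq_zero_of_lt (by omega : n - 1 < n)]
    simp

lemma binom_abs_sum (n : ℕ) (hn : 1 ≤ n) :
    ∑ j ∈ range (n+1), (n.choose j : ℤ) * |2 * (j:ℤ) - n|
      = 2 * n * (n-1).choose ((n+1)/2 - 1) := by
  set m := (n+1)/2 with hm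
  have hm1 : 1 ≤ m := by omega
  have hmn : m ≤ n := by omega
  -- B = 0
  have hB : ∑ j ∈ range (n+1), (n.choose j : ℤ) * (2 * (j:ℤ) - n) = 0 := by
    have hrefl := Finset.sum_range_reflect
      (fun j => (n.choose j : ℤ) * (2 * (j:ℤ) - n)) (n+1)
    simp only [Nat.add_sub_cancel] at hrefl
    have hneg : ∑ j ∈ range (n+1), (n.choose (n - j) : ℤ) * (2 * ((n - j : ℕ):ℤ) - n)
        = ∑ j ∈ range (n+1), -((n.choose j : ℤ) * (2 * (j:ℤ) - n)) := by
      refine Finset.sum_congr rfl fun j hj => ?_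
      have hj' : j ≤ n := by simpa [Nat.lt_succ_iff] using hj
      rw [Nat.choose_symm hj', Nat.cast_sub hj']
      ring
    rw [hneg, Finset.sum_neg_distrib] at hrefl
    linarith [hrefl]
  -- A = A + B = sum of 2*max
  have habs : ∀ j ∈ range (n+1),
      (n.choose j : ℤ) * |2 * (j:ℤ) - n| + (n.choose j : ℤ) * (2 * (j:ℤ) - n)
        = if n ≤ 2 * j then 2 * ((2 * (j:ℤ) - n) * n.choose j) else 0 := by
    intro j _
    rcases le_or_gt (n:ℤ) (2*j) with h | h
    · rw [if_pos (by exact_mod_cast h), abs_of_nonneg (by linarith)]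
      ring
    · rw [if_neg (by exact_mod_cast not_le.mpr h), abs_of_neg (by linarith)]
      ring
  have hfil : (range (n+1)).filter (fun j => n ≤ 2 * j) = Ico m (n+1) := by
    ext j
    simp only [mem_filter, mem_range, mem_Ico]
    omega
  calc ∑ j ∈ range (n+1), (n.choose j : ℤ) * |2 * (j:ℤ) - n|
      = ∑ j ∈ range (n+1), ((n.choose j : ℤ) * |2 * (j:ℤ) - n|
          + (n.choose j : ℤ) * (2 * (j:ℤ) - n)) := by
        rw [Finset.sum_add_distrib, hB, add_zero]
    _ = ∑ j ∈ range (n+1), if n ≤ 2 * j then 2 * ((2 * (j:ℤ) - n) * n.choose j) else 0 :=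
        Finset.sum_congr rfl habs
    _ = ∑ j ∈ Ico m (n+1), 2 * ((2 * (j:ℤ) - n) * n.choose j) := by
        rw [← Finset.sum_filter, hfil]
    _ = 2 * ∑ j ∈ Ico m (n+1), (2 * (j:ℤ) - n) * n.choose j := by
        rw [Finset.mul_sum]
    _ = 2 * ((n:ℤ) * (n-1).choose (m-1)) := by rw [telescope n m hm1 (by omega)]
    _ = 2 * n * (n-1).choose (m-1) := by ring

lemma pow_ineq (k : ℕ) (hk : 1 ≤ k) :
    4 ^ k ≤ 8 * k * ((k-1).choose ((k+1)/2 - 1))^2 := by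
  rcases Nat.even_or_odd k with ⟨m, hm⟩ | ⟨m, hm⟩
  · -- k = 2m, m ≥ 1
    have hm1 : 1 ≤ m := by omega
    have e1 : k - 1 = (2*m - 1) := by omega
    have e2 : (k+1)/2 - 1 = m - 1 := by omega
    rw [e1, e2]
    have hcb : Nat.centralBinom m = 2 * (2*m - 1).choose (m - 1) := by
      obtain ⟨p, rfl⟩ : ∃ p, m = p + 1 := ⟨m - 1, by omega⟩
      have h1 : 2 * (p+1) = (2*p+1) + 1 := by ring
      rw [Nat.centralBinom, h1, Nat.choose_succ_succ]
      have h3 : (2*p+1).choose (p+1) = (2*p+1).choose p := by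
        rw [← Nat.choose_symm (show p+1 ≤ 2*p+1 by omega)]
        congr 1
        omega
      rw [h3]
      simp only [Nat.add_sub_cancel]
      omega
    have := cb_ineq m hm1
    rw [hcb] at this
    calc 4 ^ k = 16 ^ m := by rw [hm]; rw [show m + m = 2 * m by ring, pow_mul]; norm_num
      _ ≤ 4 * m * (2 * (2*m-1).choose (m-1))^2 := this
      _ = 8 * (2*m) * ((2*m-1).choose (m-1))^2 := by ring
      _ = 8 * k * ((2*m-1).choose (m-1))^2 := by
          have : 2 * m = k := by omega
          rw [this]
  · -- k = 2m+1
    have e1 : k - 1 = 2*m := by omega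
    have e2 : (k+1)/2 - 1 = m := by omega
    rw [e1, e2]
    have hC : (2*m).choose m = Nat.centralBinom m := rfl
    rw [hC]
    rcases Nat.eq_zero_or_pos m with rfl | hm1
    · simp [Nat.centralBinom, hm]
    · have h := cb_ineq m hm1
      calc 4 ^ k = 4 * 16 ^ m := by
            rw [hm, pow_add, pow_one, show (4:ℕ)^(2*m) = 16^m by rw [pow_mul]; norm_num]
            ring
        _ ≤ 4 * (4 * m * Nat.centralBinom m ^ 2) := Nat.mul_le_mul_left _ h
        _ ≤ 8 * k * Nat.centralBinom m ^ 2 := by nlinarith [hm]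

def boolEquiv (n : ℕ) : Finset (Fin n) ≃ (Fin n → Bool) where
  toFun s i := decide (i ∈ s)
  invFun σ := univ.filter (fun i => σ i)
  left_inv s := by ext i; simp
  right_inv σ := by funext i; simp

/-- Khinchine's inequality with constant `1/√2`: if `σ_1, …, σ_k` are independent random
signs, each uniform on `{-1, +1}` (expectation expressed as the average over all `2^k` sign
patterns), then `E[|σ_1 + ⋯ + σ_k|] ≥ √(k/2)`. -/
theorem khinchine_lower_bound (k : ℕ) :
    Real.sqrt (k / 2) ≤
      (∑ σ : Fin k → Bool, |∑ i : Fin k, (if σ i then (1 : ℝ) else -1)|) / 2 ^ k := by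
  rcases Nat.eq_zero_or_pos k with rfl | hk
  · simp
  set C : ℕ := (k-1).choose ((k+1)/2 - 1) with hC
  -- Step 1: rewrite the sum over sign patterns as a sum over subsets
  have step1 : ∑ σ : Fin k → Bool, |∑ i : Fin k, (if σ i then (1 : ℝ) else -1)|
      = ∑ s : Finset (Fin k), |2 * (s.card : ℝ) - k| := by
    refine (Fintype.sum_equiv (boolEquiv k) _ _ fun s => ?_).symm
    congr 1
    have : ∀ i : Fin k, (if (boolEquiv k s) i then (1:ℝ) else -1)
        = (if i ∈ s then (2:ℝ) else 0) - 1 := by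
      intro i
      by_cases h : i ∈ s <;> simp [boolEquiv, h] <;> norm_num
    rw [Finset.sum_congr rfl (fun i _ => this i), Finset.sum_sub_distrib,
      Finset.sum_ite_mem, Finset.univ_inter, Finset.sum_const, Finset.sum_const]
    simp [mul_comm]
  -- Step 2: group by cardinality
  have step2 : ∑ s : Finset (Fin k), |2 * (s.card : ℝ) - k|
      = ∑ j ∈ range (k+1), (k.choose j : ℝ) * |2 * (j : ℝ) - k| := by
    rw [← Finset.powerset_univ, Finset.sum_powerset]
    rw [Finset.card_univ, Fintype.card_fin]
    refine Finset.sum_congr rfl fun j _ => ?_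
    rw [Finset.sum_powersetCard j univ (fun c => |2 * (c : ℝ) - k|)]
    rw [Finset.card_univ, Fintype.card_fin]
    simp [nsmul_eq_mul]
  -- Step 3: the ℤ identity
  have step3 : ∑ j ∈ range (k+1), (k.choose j : ℝ) * |2 * (j : ℝ) - k|
      = 2 * k * C := by
    have h := binom_abs_sum k hk
    have := congrArg (fun z : ℤ => (z : ℝ)) h
    push_cast at this
    rw [← this]
  rw [step1, step2, step3]
  -- Step 4: the numeric inequality
  have hnat := pow_ineq k hk
  have hnat' : (4:ℝ)^k ≤ 8 * k * (C:ℝ)^2 := by exact_mod_cast hnat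
  have hx : (0:ℝ) ≤ 2 * k * C / 2 ^ k := by positivity
  have hsq : (k:ℝ)/2 ≤ (2 * (k:ℝ) * C / 2 ^ k)^2 := by
    rw [div_pow, div_le_div_iff₀ (by norm_num) (by positivity)]
    have h4 : ((2:ℝ)^k)^2 = 4^k := by
      rw [← pow_mul, mul_comm, pow_mul]; norm_num
    rw [h4]
    have hk1 : (1:ℝ) ≤ k := by exact_mod_cast hk
    nlinarith [hnat', hk1, sq_nonneg ((C:ℝ))]
  calc Real.sqrt (k/2) ≤ Real.sqrt ((2 * (k:ℝ) * C / 2 ^ k)^2) := Real.sqrt_le_sqrt hsq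
    _ = 2 * (k:ℝ) * C / 2 ^ k := Real.sqrt_sq hx
end

section
/- For every n ∈ ℕ there exists a finite domain X, a finite label set Y, and a hypothesis class H ⊆ Y^X such that the DS dimension of H equals 1, yet the transductive online adversary can force n mistakes: M(H,n) = n. -/
open scoped Classical

/-- Number of mistakes made by learner strategy `A` in the transductive online game of
length `n`, when the adversary presents the sequence `x` and labels according to `h`. -/
noncomputable def mistakes {X Y : Type*} {n : ℕ} (A : (Fin n → X) → List Y → Y)
    (x : Fin n → X) (h : X → Y) : ℕ :=
  (Finset.univ.filter (fun t : Fin n =>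
    A x (List.ofFn (fun i : Fin t.1 => h (x ⟨i.1, i.2.trans t.2⟩))) ≠ h (x t))).card

/-- `C` is a `d`-pseudocube in `Y^d`: it is nonempty, finite, and every `y ∈ C` has an
`i`-neighbor in `C` for every coordinate `i` (a vector differing from `y` exactly at `i`). -/
def IsPseudocube {Y : Type*} (d : ℕ) (C : Finset (Fin d → Y)) : Prop :=
  C.Nonempty ∧ ∀ y ∈ C, ∀ i : Fin d, ∃ y' ∈ C, y' i ≠ y i ∧ ∀ j ≠ i, y' j = y j

/-- `H` DS-shatters the tuple `x ∈ X^d`: the set of behaviors of `H` on `x` contains a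
`d`-pseudocube. -/
def DSshatters {X Y : Type*} (H : Set (X → Y)) (d : ℕ) (x : Fin d → X) : Prop :=
  ∃ C : Finset (Fin d → Y), IsPseudocube d C ∧
    ∀ y ∈ C, ∃ h ∈ H, ∀ i : Fin d, h (x i) = y i

/-- The Daniely–Shalev-Shwartz (DS) dimension of `H`, as an extended natural number. -/
noncomputable def DSdim {X Y : Type*} (H : Set (X → Y)) : ℕ∞ :=
  sSup {e : ℕ∞ | ∃ d : ℕ, e = d ∧ ∃ x : Fin d → X, DSshatters H d x}

/-! ### Auxiliary construction -/

/-- The "tree branch" hypothesis determined by a bit vector `b`: at level `x` it reveals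
the prefix of `b` up to `x` (padded with `false`). -/
def hyp (n : ℕ) (b : Fin (n+1) → Bool) : Fin (n+1) → (Fin (n+1) → Bool) :=
  fun x i => if i.1 ≤ x.1 then b i else false

lemma hyp_order {n : ℕ} {b b' : Fin (n+1) → Bool} {a c : Fin (n+1)}
    (hagree : hyp n b a = hyp n b' a) (hdiff : hyp n b c ≠ hyp n b' c) :
    a.1 < c.1 := by
  by_contra hlt
  push_neg at hlt
  apply hdiff
  funext i
  simp only [hyp]
  by_cases hi : i.1 ≤ c.1
  · have h2 : i.1 ≤ a.1 := le_trans hi hlt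
    have := congrFun hagree i
    simp only [hyp, h2, if_true] at this
    simp [hi, this]
  · simp [hi]

lemma no_shatter {n d : ℕ} (hd : 2 ≤ d) (x : Fin d → Fin (n+1)) :
    ¬ DSshatters (Set.range (hyp n)) d x := by
  rintro ⟨C, ⟨⟨y, hy⟩, hnb⟩, hreal⟩
  have h0 : (0 : ℕ) < d := by omega
  have h1 : (1 : ℕ) < d := by omega
  set i0 : Fin d := ⟨0, h0⟩ with hi0
  set i1 : Fin d := ⟨1, h1⟩ with hi1
  have hne : i1 ≠ i0 := by simp [hi0, hi1, Fin.ext_iff]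
  obtain ⟨y0, hy0C, hy0ne, hy0eq⟩ := hnb y hy i0
  obtain ⟨y1, hy1C, hy1ne, hy1eq⟩ := hnb y hy i1
  obtain ⟨h, ⟨b, rfl⟩, hh⟩ := hreal y hy
  obtain ⟨h0', ⟨b0, rfl⟩, hh0⟩ := hreal y0 hy0C
  obtain ⟨h1', ⟨b1, rfl⟩, hh1⟩ := hreal y1 hy1C
  have hlt1 : (x i1).1 < (x i0).1 := by
    refine hyp_order (b := b) (b' := b0) ?_ ?_
    · rw [hh i1, hh0 i1, hy0eq i1 hne]
    · rw [hh i0, hh0 i0]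
      exact fun hcon => hy0ne hcon.symm
  have hlt2 : (x i0).1 < (x i1).1 := by
    refine hyp_order (b := b) (b' := b1) ?_ ?_
    · rw [hh i0, hh1 i0, hy1eq i0 (Ne.symm hne)]
    · rw [hh i1, hh1 i1]
      exact fun hcon => hy1ne hcon.symm
  omega

lemma shatter_one (n : ℕ) :
    ∃ x : Fin 1 → Fin (n+1), DSshatters (Set.range (hyp n)) 1 x := by
  refine ⟨fun _ => ⟨0, n.succ_pos⟩, ?_⟩
  set v0 : Fin (n+1) → Bool := hyp n (fun _ => false) ⟨0, n.succ_pos⟩ with hv0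
  set v1 : Fin (n+1) → Bool := hyp n (fun _ => true) ⟨0, n.succ_pos⟩ with hv1
  have hv : v0 ≠ v1 := by
    intro hcon
    have := congrFun hcon ⟨0, n.succ_pos⟩
    simp [hv0, hv1, hyp] at this
  have hc : (fun _ : Fin 1 => v0) ≠ (fun _ : Fin 1 => v1) := by
    intro hcon; exact hv (congrFun hcon 0)
  refine ⟨{fun _ => v0, fun _ => v1}, ⟨⟨fun _ => v0, Finset.mem_insert_self _ _⟩, ?_⟩, ?_⟩
  · intro y hyC i
    rcases Finset.mem_insert.1 hyC with h | h
    · refine ⟨fun _ => v1, by simp, ?_, ?_⟩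
      · rw [h]; exact hv.symm
      · intro j hj; exact absurd (Subsingleton.elim j i) hj
    · rw [Finset.mem_singleton] at h
      refine ⟨fun _ => v0, by simp, ?_, ?_⟩
      · rw [h]; exact hv
      · intro j hj; exact absurd (Subsingleton.elim j i) hj
  · intro y hyC
    rcases Finset.mem_insert.1 hyC with h | h
    · exact ⟨hyp n (fun _ => false), ⟨_, rfl⟩, by intro i; rw [h]⟩
    · rw [Finset.mem_singleton] at h
      exact ⟨hyp n (fun _ => true), ⟨_, rfl⟩, by intro i; rw [h]⟩

/-- The adversarial bit sequence, defined by recursion: at time `t`, the bit differs from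
coordinate `t` of the learner's prediction. -/
noncomputable def advBit (n : ℕ)
    (A : (Fin n → Fin (n+1)) → List (Fin (n+1) → Bool) → (Fin (n+1) → Bool)) :
    ℕ → Bool := fun t =>
  if ht : t < n + 1 then
    ! (A (fun s => s.castSucc)
        (List.ofFn (fun i : Fin t => fun j : Fin (n+1) =>
          if hj : j.1 ≤ i.1 then advBit n A j.1 else false))
        ⟨t, ht⟩)
  else false
termination_by t => t
decreasing_by exact lt_of_le_of_lt hj i.2

/-- For every `n` there is a hypothesis class `H` over a finite domain and finite label set
whose DS dimension equals `1`, yet the transductive online adversary can force `n`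
mistakes: `M(H,n) = n`. The DS dimension therefore does not characterize transductive
online learning. -/
theorem ds_dimension_does_not_characterize (n : ℕ) :
    ∃ (X Y : Type) (_ : Fintype X) (_ : Fintype Y) (H : Set (X → Y)),
      DSdim H = 1 ∧
      ∀ A : (Fin n → X) → List Y → Y,
        ∃ x : Fin n → X, ∃ h ∈ H, mistakes A x h = n := by
  refine ⟨Fin (n+1), Fin (n+1) → Bool, inferInstance, inferInstance,
    Set.range (hyp n), ?_, ?_⟩
  · -- DS dimension is 1
    apply le_antisymm
    · apply sSup_le
      rintro e ⟨d, rfl, x, hx⟩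
      by_contra hgt
      push_neg at hgt
      have hd1 : (1 : ℕ) < d := by exact_mod_cast hgt
      exact no_shatter (by omega) x hx
    · obtain ⟨x, hx⟩ := shatter_one n
      exact le_sSup ⟨1, (Nat.cast_one).symm, x, hx⟩
  · -- adversary forces n mistakes
    intro A
    set b : Fin (n+1) → Bool := fun j => advBit n A j.1 with hb
    refine ⟨fun s => s.castSucc, hyp n b, ⟨b, rfl⟩, ?_⟩
    have key : ∀ t : Fin n,
        A (fun s => s.castSucc)
          (List.ofFn (fun i : Fin t.1 =>
            hyp n b (Fin.castSucc ⟨i.1, i.2.trans t.2⟩)))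
          ≠ hyp n b t.castSucc := by
      intro t heq
      have ht : t.1 < n + 1 := t.2.trans (Nat.lt_succ_self n)
      have hlist : (List.ofFn (fun i : Fin t.1 =>
            hyp n b (Fin.castSucc ⟨i.1, i.2.trans t.2⟩)))
          = (List.ofFn (fun i : Fin t.1 => fun j : Fin (n+1) =>
            if hj : j.1 ≤ i.1 then advBit n A j.1 else false)) := by
        refine congrArg _ (funext fun i => funext fun j => ?_)
        simp only [hyp, hb, Fin.coe_castSucc]
        by_cases hj : j.1 ≤ i.1 <;> simp [hj]
      have h1 : hyp n b t.castSucc ⟨t.1, ht⟩ = advBit n A t.1 := by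
        simp [hyp, hb]
      have h2 : advBit n A t.1
          = ! (A (fun s => s.castSucc)
              (List.ofFn (fun i : Fin t.1 => fun j : Fin (n+1) =>
                if hj : j.1 ≤ i.1 then advBit n A j.1 else false))
              ⟨t.1, ht⟩) := by
        rw [advBit]
        exact dif_pos ht
      have := congrFun heq ⟨t.1, ht⟩
      rw [h1, h2, hlist] at this
      simp at this
    simp only [mistakes]
    have huniv : (Finset.univ.filter (fun t : Fin n =>
        A (fun s => s.castSucc)
          (List.ofFn (fun i : Fin t.1 =>
            hyp n b (Fin.castSucc ⟨i.1, i.2.trans t.2⟩)))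
          ≠ hyp n b t.castSucc)) = Finset.univ := by
      ext t
      simpa using key t
    rw [Finset.filter_congr_decidable, huniv, Finset.card_univ, Fintype.card_fin]
end

section
/- Let H ⊆ Y^X where |Y| = k < ∞. Then the multiclass threshold dimension and the (two-label) threshold dimension satisfy TD(H) ≥ ⌊MTD(H)/k²⌋. -/
/-- The multiclass threshold dimension of `H` is at least `t`: there are points
`x_1,…,x_t`, labels `y_1,…,y_t` and `y'_1,…,y'_t` with `y_i ≠ y'_j` for all `i,j`, and
hypotheses `h_1,…,h_t ∈ H` with `h_i(x_j) = y_i` for `j ≤ i` and `h_i(x_j) = y'_j` for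
`j > i`. -/
def MTDge {X Y : Type*} (H : Set (X → Y)) (t : ℕ) : Prop :=
  ∃ (x : Fin t → X) (y y' : Fin t → Y) (h : Fin t → X → Y),
    (∀ i j, y i ≠ y' j) ∧ (∀ i, h i ∈ H) ∧
    ∀ i j, h i (x j) = if j ≤ i then y i else y' j

/-- The (two-label) threshold dimension of `H` is at least `t`: there are two distinct
labels `y_0 ≠ y_1`, points `x_1,…,x_t` and hypotheses `h_1,…,h_t ∈ H` with
`h_i(x_j) = y_1` if `j ≤ i` and `h_i(x_j) = y_0` otherwise. -/
def TDge {X Y : Type*} (H : Set (X → Y)) (t : ℕ) : Prop :=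
  t = 0 ∨ ∃ (y₀ y₁ : Y), y₀ ≠ y₁ ∧ ∃ (x : Fin t → X) (h : Fin t → X → Y),
    (∀ i, h i ∈ H) ∧ ∀ i j, h i (x j) = if j ≤ i then y₁ else y₀

/-- If `|Y| = k < ∞` then `TD(H) ≥ ⌊MTD(H)/k²⌋`. -/
theorem td_ge_mtd_div_k_sq {X Y : Type*} (H : Set (X → Y)) (k : ℕ)
    [Finite Y] (hY : Nat.card Y = k) (t : ℕ) (hMTD : MTDge H t) :
    TDge H (t / k ^ 2) := by
  set s := t / k ^ 2 with hs
  rcases Nat.eq_zero_or_pos s with h0 | hpos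
  · exact Or.inl h0
  obtain ⟨x, y, y', h, hne, hmem, hval⟩ := hMTD
  have ht : 0 < t := by
    by_contra ht
    push_neg at ht
    interval_cases t
    simp [hs] at hpos
  haveI : NeZero t := ⟨ht.ne'⟩
  haveI : Nonempty Y := ⟨y ⟨0, ht⟩⟩
  cases nonempty_fintype Y
  classical
  have hk : Fintype.card Y = k := by rwa [Nat.card_eq_fintype_card] at hY
  -- pigeonhole on i ↦ (y i, y' i)
  have hcard : Fintype.card (Y × Y) * s ≤ Fintype.card (Fin t) := by
    simp only [Fintype.card_prod, hk, Fintype.card_fin]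
    calc k * k * s = k ^ 2 * s := by ring
    _ ≤ t := by rw [hs]; exact Nat.mul_div_le t (k ^ 2) |>.trans_eq (by ring_nf) |>.trans (le_refl t)
  obtain ⟨⟨y₁, y₀⟩, hfib⟩ :=
    Fintype.exists_le_card_fiber_of_mul_le_card (f := fun i : Fin t => (y i, y' i)) hcard
  -- take a subset of size s
  obtain ⟨G, hGsub, hGcard⟩ := Finset.exists_subset_card_eq hfib
  have e := G.orderIsoOfFin hGcard
  have hGmem : ∀ j : Fin s, y ((e j : Fin t)) = y₁ ∧ y' ((e j : Fin t)) = y₀ := by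
    intro j
    have := hGsub (e j).2
    simp only [Finset.mem_filter, Finset.mem_univ, true_and, Prod.mk.injEq] at this
    exact this
  have hne01 : y₀ ≠ y₁ := by
    rw [← (hGmem ⟨0, hpos⟩).1, ← (hGmem ⟨0, hpos⟩).2]
    exact (hne _ _).symm
  refine Or.inr ⟨y₀, y₁, hne01, fun j => x (e j : Fin t), fun i => h (e i : Fin t),
    fun i => hmem _, fun i j => ?_⟩
  show h (e i : Fin t) (x (e j : Fin t)) = _
  rw [hval]
  have hle : ((e j : Fin t) ≤ (e i : Fin t)) ↔ j ≤ i := by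
    rw [Subtype.coe_le_coe, e.le_iff_le]
  by_cases hji : j ≤ i
  · rw [if_pos hji, if_pos (hle.mpr hji), (hGmem i).1]
  · rw [if_neg hji, if_neg (fun c => hji (hle.mp c)), (hGmem j).2]
end

section
/- Let H be a class of boolean functions on X with VC(H) < ∞ and LD(H) = ∞, and let n ≤ |X|. Then the transductive online mistake bound satisfies max(min(VC(H), n), ⌊log₂ n⌋) ≤ M(H,n) ≤ O(VC(H)·log(n/VC(H))); in particular M(H,n) = Θ(log n) for fixed H. -/
/-!
For the lower bound `min(v, n)`, the adversary presents a shattered set of that size and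
contradicts every prediction. For `k = ⌊log₂ n⌋`, a Ramsey argument on deep Littlestone trees (if
a tree of depth `a + b` is shattered and the class is two-coloured, one colour class shatters a
tree of depth `a` or the other one a tree of depth `b`) yields a fixed sequence `z :: (us ++ vs)`
of fewer than `2 ^ k` points on which the adversary runs binary search: after contradicting the
guess at `z` it continues recursively either on `us`, or on `vs` with functions that all agree
on `us`.

For the upper bound, `H` has at most `(n + 1) ^ v` label patterns on a sample of size `n`
(Sauer–Shelah), and the halving learner halves their number at each mistake.
-/

open scoped Classical

/-- `H` shatters the finite set `s`. -/
def Shatters {X : Type*} (H : Set (X → Bool)) (s : Finset X) : Prop :=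
  ∀ f : X → Bool, ∃ h ∈ H, ∀ a ∈ s, h a = f a

/-- The VC dimension of `H`, as an extended natural number. -/
noncomputable def VCdim {X : Type*} (H : Set (X → Bool)) : ℕ∞ :=
  sSup {e : ℕ∞ | ∃ s : Finset X, (s.card : ℕ∞) = e ∧ Shatters H s}

/-- `H` shatters some Littlestone tree of depth `d` (nodes indexed by binary strings of
length `< d`). -/
def LDge {X : Type*} (H : Set (X → Bool)) (d : ℕ) : Prop :=
  ∃ x : List Bool → X, ∀ σ : List Bool, σ.length = d →
    ∃ h ∈ H, ∀ i : ℕ, ∀ hi : i < σ.length, h (x (σ.take i)) = σ.get ⟨i, hi⟩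

/-- The Littlestone dimension of `H`, as an extended natural number. -/
noncomputable def Ldim {X : Type*} (H : Set (X → Bool)) : ℕ∞ :=
  sSup {e : ℕ∞ | ∃ d : ℕ, e = d ∧ LDge H d}

section Game

variable {X Y : Type*}

/-- `L` predicts the next label from the labels revealed so far. -/
noncomputable def labelMistakes (L : List Y → Y) : List Y → ℕ
  | [] => 0
  | b :: bs => (if L [] = b then 0 else 1) + labelMistakes (fun l => L (b :: l)) bs

theorem labelMistakes_append (L : List Y → Y) (bs cs : List Y) :
    labelMistakes L (bs ++ cs) =
      labelMistakes L bs + labelMistakes (fun l => L (bs ++ l)) cs := by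
  induction bs generalizing L with
  | nil => simp [labelMistakes]
  | cons b bs ih => simp only [List.cons_append, labelMistakes, ih]; ring

theorem labelMistakes_le_append (L : List Y → Y) (bs cs : List Y) :
    labelMistakes L bs ≤ labelMistakes L (bs ++ cs) := by
  rw [labelMistakes_append]; exact Nat.le_add_right _ _

theorem card_filter_eq_labelMistakes {n : ℕ} (L : List Y → Y) (g : Fin n → Y) :
    (Finset.univ.filter (fun t : Fin n =>
      L (List.ofFn (fun i : Fin t.1 => g ⟨i.1, i.2.trans t.2⟩)) ≠ g t)).card =
      labelMistakes L (List.ofFn g) := by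
  induction n generalizing L with
  | zero => simp [labelMistakes]
  | succ n ih =>
    rw [Finset.card_filter, Fin.sum_univ_succ, ← Finset.card_filter, List.ofFn_succ, labelMistakes,
      ← ih]
    by_cases h : L [] = g 0 <;> simp [h, List.ofFn_succ]

theorem mistakes_eq_labelMistakes {n : ℕ} (A : (Fin n → X) → List Y → Y) (x : Fin n → X)
    (h : X → Y) : mistakes A x h = labelMistakes (A x) (List.ofFn fun i => h (x i)) :=
  card_filter_eq_labelMistakes (A x) fun i => h (x i)

theorem exists_labelMistakes_eq_length (L : List Bool → Bool) (m : ℕ) :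
    ∃ bs : List Bool, bs.length = m ∧ labelMistakes L bs = m := by
  induction m generalizing L with
  | zero => exact ⟨[], rfl, rfl⟩
  | succ m ih =>
    obtain ⟨bs, hlen, hbs⟩ := ih fun l => L ((!L []) :: l)
    exact ⟨(!L []) :: bs, by simp [hlen], by simp [labelMistakes, hbs, add_comm]⟩

end Game

section Forcing

variable {X : Type*}

def Forces (F : Set (X → Bool)) (zs : List X) (k : ℕ) : Prop :=
  ∀ L : List Bool → Bool, ∃ h ∈ F, k ≤ labelMistakes L (zs.map h)

theorem Forces.mono {F G : Set (X → Bool)} {zs : List X} {k : ℕ} (hFG : F ⊆ G)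
    (hF : Forces F zs k) : Forces G zs k := fun L =>
  let ⟨h, hh, hk⟩ := hF L
  ⟨h, hFG hh, hk⟩

theorem forces_nil_zero {F : Set (X → Bool)} (hF : F.Nonempty) : Forces F [] 0 :=
  fun _ => ⟨hF.some, hF.some_mem, Nat.zero_le _⟩

theorem List.Nodup.exists_map_eq {zs : List X} (hzs : zs.Nodup) {bs : List Bool}
    (hlen : bs.length = zs.length) : ∃ f : X → Bool, zs.map f = bs := by
  induction zs generalizing bs with
  | nil => exact ⟨fun _ => false, (List.length_eq_zero_iff.mp hlen).symm⟩
  | cons z zs ih =>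
    obtain ⟨b, bs, rfl⟩ := List.exists_cons_of_length_eq_add_one hlen
    obtain ⟨f, hf⟩ := ih hzs.of_cons (Nat.succ_injective hlen)
    refine ⟨Function.update f z b, ?_⟩
    have hz : z ∉ zs := (List.nodup_cons.mp hzs).1
    rw [List.map_cons, Function.update_self, ← hf,
      List.map_congr_left fun a ha => Function.update_of_ne (ne_of_mem_of_not_mem ha hz) _ _]

theorem Shatters.forces_toList {H : Set (X → Bool)} {s : Finset X} (hs : Shatters H s) :
    Forces H s.toList s.card := by
  intro L
  obtain ⟨bs, hlen, hbs⟩ := exists_labelMistakes_eq_length L s.card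
  obtain ⟨f, hf⟩ := s.nodup_toList.exists_map_eq (bs := bs) (by simpa using hlen)
  obtain ⟨h, hH, hhf⟩ := hs f
  refine ⟨h, hH, ?_⟩
  rw [List.map_congr_left fun a ha => hhf a (Finset.mem_toList.mp ha), hf, hbs]

theorem Forces.cons_append {F₀ F₁ : Set (X → Bool)} {z : X} {us vs : List X} {ws : List Bool}
    {k : ℕ} (h₀ : Forces F₀ us k) (h₁ : Forces F₁ vs k) (hz₀ : ∀ h ∈ F₀, h z = false)
    (hz₁ : ∀ h ∈ F₁, h z = true) (hws : ∀ h ∈ F₁, us.map h = ws) :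
    Forces (F₀ ∪ F₁) (z :: (us ++ vs)) (k + 1) := by
  intro L
  cases hL : L [] with
  | true =>
    obtain ⟨h, hh, hk⟩ := h₀ fun l => L (false :: l)
    refine ⟨h, Or.inl hh, ?_⟩
    have := labelMistakes_le_append (fun l => L (false :: l)) (us.map h) (vs.map h)
    simp only [List.map_cons, List.map_append, labelMistakes, hz₀ h hh, hL, Bool.true_eq_false,
      if_false]
    omega
  | false =>
    obtain ⟨h, hh, hk⟩ := h₁ fun l => L (true :: (ws ++ l))
    refine ⟨h, Or.inr hh, ?_⟩
    simp only [List.map_cons, List.map_append, labelMistakes, hz₁ h hh, hL, Bool.false_eq_true,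
      if_false, labelMistakes_append, hws h hh]
    omega

theorem List.exists_ofFn_eq {l : List X} {n : ℕ} (hl : l.length = n) :
    ∃ x : Fin n → X, List.ofFn x = l := by
  subst hl
  exact ⟨_, List.ofFn_getElem⟩

theorem Forces.exists_le_mistakes [Nonempty X] {H : Set (X → Bool)} {zs : List X} {k n : ℕ}
    (hF : Forces H zs k) (hn : zs.length ≤ n) (A : (Fin n → X) → List Bool → Bool) :
    ∃ x : Fin n → X, ∃ h ∈ H, k ≤ mistakes A x h := by
  obtain ⟨x, hx⟩ := List.exists_ofFn_eq (n := n)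
    (l := zs ++ List.replicate (n - zs.length) (Classical.arbitrary X)) (by simp; omega)
  obtain ⟨h, hH, hk⟩ := hF (A x)
  refine ⟨x, h, hH, ?_⟩
  rw [mistakes_eq_labelMistakes, List.ofFn_comp', hx, List.map_append]
  exact hk.trans (labelMistakes_le_append _ _ _)

end Forcing

section LittlestoneTree

variable {X : Type*}

/-- Nodes of the tree `x` are indexed by their paths from the root. -/
def ShattersTree (F : Set (X → Bool)) (x : List Bool → X) (d : ℕ) : Prop :=
  ∀ σ : List Bool, σ.length = d →
    ∃ h ∈ F, ∀ i : ℕ, ∀ hi : i < σ.length, h (x (σ.take i)) = σ.get ⟨i, hi⟩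

namespace ShattersTree

variable {F G : Set (X → Bool)} {x : List Bool → X} {d : ℕ}

theorem mono_set (hFG : F ⊆ G) (hF : ShattersTree F x d) : ShattersTree G x d := fun σ hσ =>
  let ⟨h, hh, hσh⟩ := hF σ hσ
  ⟨h, hFG hh, hσh⟩

theorem zero_iff : ShattersTree F x 0 ↔ F.Nonempty := by
  refine ⟨fun hF => ?_, fun ⟨h, hh⟩ σ hσ => ⟨h, hh, fun i hi => absurd hi (by omega)⟩⟩
  obtain ⟨h, hh, -⟩ := hF [] rfl
  exact ⟨h, hh⟩

theorem succ_iff : ShattersTree F x (d + 1) ↔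
    ∀ b, ShattersTree {h ∈ F | h (x []) = b} (fun σ => x (b :: σ)) d := by
  constructor
  · intro hF b σ hσ
    obtain ⟨h, hh, hσh⟩ := hF (b :: σ) (by simp [hσ])
    exact ⟨h, ⟨hh, hσh 0 (by simp)⟩, fun i hi => hσh (i + 1) (by simp [hi])⟩
  · intro hF σ hσ
    obtain ⟨b, σ, rfl⟩ := List.exists_cons_of_length_eq_add_one hσ
    obtain ⟨h, ⟨hh, hroot⟩, hσh⟩ := hF b σ (by simpa using hσ)
    refine ⟨h, hh, fun i hi => ?_⟩
    cases i with
    | zero => simpa using hroot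
    | succ i => simpa using hσh i (by simpa using hi)

theorem of_succ (hF : ShattersTree F x (d + 1)) : ShattersTree F x d := by
  induction d generalizing F x with
  | zero => exact zero_iff.mpr ((zero_iff.mp (succ_iff.mp hF false)).mono (Set.sep_subset _ _))
  | succ d ih => exact succ_iff.mpr fun b => ih (succ_iff.mp hF b)

theorem mono_depth {d' : ℕ} (hF : ShattersTree F x d') (hdd' : d ≤ d') : ShattersTree F x d :=
  antitone_nat_of_succ_le (f := fun d => ShattersTree F x d) (fun _ => of_succ) hdd' hF

end ShattersTree

def treeCons (z : X) (xs : Bool → List Bool → X) : List Bool → X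
  | [] => z
  | b :: σ => xs b σ

theorem ShattersTree.ramsey (c : (X → Bool) → Bool) (a b : ℕ) {F : Set (X → Bool)}
    {x : List Bool → X} (hF : ShattersTree F x (a + b)) :
    (∃ x', ShattersTree {h ∈ F | c h = false} x' a) ∨
      ∃ x', ShattersTree {h ∈ F | c h = true} x' b := by
  induction b generalizing a F x with
  | zero =>
    by_cases htrue : ∃ h ∈ F, c h = true
    · exact Or.inr ⟨x, zero_iff.mpr htrue⟩
    · push Not at htrue
      exact Or.inl ⟨x, hF.mono_set fun h hh => ⟨hh, by simpa using htrue h hh⟩⟩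
  | succ b ih =>
    cases a with
    | zero =>
      by_cases hfalse : ∃ h ∈ F, c h = false
      · exact Or.inl ⟨x, zero_iff.mpr hfalse⟩
      · push Not at hfalse
        refine Or.inr ⟨x, ?_⟩
        exact (zero_add (b + 1) ▸ hF).mono_set fun h hh => ⟨hh, by simpa using hfalse h hh⟩
    | succ a =>
      have hsub := succ_iff.mp (show ShattersTree F x (a + 1 + b + 1) by rwa [← add_assoc] at hF)
      rcases ih (a + 1) (hsub false) with ⟨x₀, h₀⟩ | ⟨x₀, h₀⟩
      · exact Or.inl ⟨x₀, h₀.mono_set fun h hh => ⟨hh.1.1, hh.2⟩⟩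
      rcases ih (a + 1) (hsub true) with ⟨x₁, h₁⟩ | ⟨x₁, h₁⟩
      · exact Or.inl ⟨x₁, h₁.mono_set fun h hh => ⟨hh.1.1, hh.2⟩⟩
      refine Or.inr ⟨treeCons (x []) fun β => cond β x₁ x₀, succ_iff.mpr fun β => ?_⟩
      cases β
      · exact h₀.mono_set fun h hh => ⟨⟨hh.1.1, hh.2⟩, hh.1.2⟩
      · exact h₁.mono_set fun h hh => ⟨⟨hh.1.1, hh.2⟩, hh.1.2⟩

end LittlestoneTree

section LittlestoneForcing

variable {X : Type*}

theorem ShattersTree.exists_map_eq (us : List X) {F : Set (X → Bool)} {x : List Bool → X}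
    {m : ℕ} (hF : ShattersTree F x (2 ^ us.length * m)) :
    ∃ (ws : List Bool) (x' : List Bool → X), ShattersTree {h ∈ F | us.map h = ws} x' m := by
  induction us generalizing F x with
  | nil =>
    exact ⟨[], x, (by simpa using hF : ShattersTree F x m).mono_set fun h hh => ⟨hh, rfl⟩⟩
  | cons u us ih =>
    obtain ⟨β, x₁, h₁⟩ : ∃ β x₁, ShattersTree {h ∈ F | h u = β} x₁ (2 ^ us.length * m) := by
      rcases ShattersTree.ramsey (fun h => h u) _ _
          (show ShattersTree F x (2 ^ us.length * m + 2 ^ us.length * m) by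
            rwa [← two_mul, ← mul_assoc, ← pow_succ'])
        with ⟨x₁, h₁⟩ | ⟨x₁, h₁⟩
      exacts [⟨false, x₁, h₁⟩, ⟨true, x₁, h₁⟩]
    obtain ⟨ws, x₂, h₂⟩ := ih h₁
    exact ⟨β :: ws, x₂, h₂.mono_set fun h hh => ⟨hh.1.1, by simp [hh.1.2, hh.2]⟩⟩

/-- In the gadget of `Forces.cons_append`, `us` comes from the left subtree and `vs` from a
subtree of the right subtree on which all functions agree on `us`. -/
theorem exists_forces_of_shattersTree (k : ℕ) :
    ∃ E : ℕ, ∀ (F : Set (X → Bool)) (x : List Bool → X), ShattersTree F x E →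
      ∃ zs : List X, zs.length < 2 ^ k ∧ Forces F zs k := by
  induction k with
  | zero =>
    exact ⟨0, fun F x hF => ⟨[], by simp, forces_nil_zero (ShattersTree.zero_iff.mp hF)⟩⟩
  | succ k ih =>
    obtain ⟨E, hE⟩ := ih
    refine ⟨2 ^ 2 ^ k * E + 1, fun F x hF => ?_⟩
    have hsub := ShattersTree.succ_iff.mp hF
    obtain ⟨us, hus, h₀⟩ :=
      hE _ _ ((hsub false).mono_depth (Nat.le_mul_of_pos_left E (by positivity)))
    obtain ⟨ws, x₁, h₁⟩ := ((hsub true).mono_depth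
      (Nat.mul_le_mul_right E (Nat.pow_le_pow_right two_pos hus.le))).exists_map_eq us
    obtain ⟨vs, hvs, hF₁⟩ := hE _ _ h₁
    refine ⟨x [] :: (us ++ vs), by simp [pow_succ]; omega, ?_⟩
    refine (h₀.cons_append hF₁ (fun h hh => hh.2) (fun h hh => hh.1.2)
      fun h hh => hh.2).mono ?_
    rintro h (hh | hh)
    exacts [hh.1, hh.1.1]

theorem exists_shattersTree_of_ldim_eq_top {H : Set (X → Bool)} (hLD : Ldim H = ⊤) (d : ℕ) :
    ∃ x, ShattersTree H x d := by
  by_contra hd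
  have hle : Ldim H ≤ d := sSup_le <| by
    rintro _ ⟨d', rfl, x, hx⟩
    exact_mod_cast le_of_not_gt fun hlt => hd ⟨x, ShattersTree.mono_depth hx hlt.le⟩
  simp [hLD] at hle

theorem exists_forces_log {H : Set (X → Bool)} (hLD : Ldim H = ⊤) (n : ℕ) :
    ∃ zs : List X, zs.length ≤ n ∧ Forces H zs (Nat.log 2 n) := by
  obtain ⟨E, hE⟩ := exists_forces_of_shattersTree (X := X) (Nat.log 2 n)
  obtain ⟨x, hx⟩ := exists_shattersTree_of_ldim_eq_top hLD E
  obtain ⟨zs, hlen, hzs⟩ := hE H x hx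
  refine ⟨zs, ?_, hzs⟩
  rcases n.eq_zero_or_pos with rfl | hn
  · simpa using hlen
  · exact (hlen.trans_le (Nat.pow_log_le_self 2 hn.ne')).le

end LittlestoneForcing

section VCForcing

variable {X : Type*} {H : Set (X → Bool)} {v : ℕ}

theorem card_le_of_shatters (hVC : VCdim H = v) {s : Finset X} (hs : Shatters H s) :
    s.card ≤ v := by
  have : (s.card : ℕ∞) ≤ VCdim H := le_sSup ⟨s, rfl, hs⟩
  exact_mod_cast hVC ▸ this

theorem exists_shatters_card_eq (hVC : VCdim H = v) (hH : H.Nonempty) {m : ℕ} (hm : m ≤ v) :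
    ∃ s : Finset X, s.card = m ∧ Shatters H s := by
  have : Nonempty {e : ℕ∞ | ∃ s : Finset X, (s.card : ℕ∞) = e ∧ Shatters H s} :=
    ⟨⟨0, ∅, rfl, fun _ => ⟨hH.some, hH.some_mem, by simp⟩⟩⟩
  obtain ⟨s, hs, hsh⟩ := ENat.sSup_mem_of_nonempty_of_lt_top <| by
    rw [← VCdim, hVC]
    exact ENat.natCast_lt_top v
  rw [← VCdim, hVC] at hs
  obtain ⟨t, hts, htm⟩ := Finset.exists_subset_card_eq (hm.trans (by exact_mod_cast hs.ge))
  refine ⟨t, htm, fun f => ?_⟩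
  obtain ⟨h, hh, hf⟩ := hsh f
  exact ⟨h, hh, fun a ha => hf a (hts ha)⟩

theorem exists_forces_min (hVC : VCdim H = v) (hH : H.Nonempty) (n : ℕ) :
    ∃ zs : List X, zs.length ≤ n ∧ Forces H zs (min v n) := by
  obtain ⟨s, hs, hsh⟩ := exists_shatters_card_eq hVC hH (min_le_left v n)
  exact ⟨s.toList, by simp [hs], hs ▸ hsh.forces_toList⟩

end VCForcing

section Halving

open Finset

def follow (S : Finset (List Bool)) (b : Bool) : Finset (List Bool) :=
  (S.filter fun w => w.head? = some b).image List.tail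

/-- Majority vote over the sequences in `S` that extend the labels seen so far. -/
def halving (S : Finset (List Bool)) : List Bool → Bool
  | [] => decide (#(S.filter fun w => w.head? = some false) ≤
      #(S.filter fun w => w.head? = some true))
  | b :: l => halving (follow S b) l

theorem two_mul_card_follow_le {S : Finset (List Bool)} {b : Bool} (hb : halving S [] ≠ b) :
    2 * #(follow S b) ≤ #S := by
  have hsplit : #(S.filter fun w => w.head? = some false) +
      #(S.filter fun w => w.head? = some true) ≤ #S := by
    rw [← card_union_of_disjoint (disjoint_filter.mpr fun w _ hf ht => by simp [hf] at ht)]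
    exact card_le_card (union_subset (filter_subset _ _) (filter_subset _ _))
  have hfollow : #(follow S b) ≤ #(S.filter fun w => w.head? = some b) := card_image_le
  cases b <;> simp only [halving, ne_eq, decide_eq_false_iff_not, decide_eq_true_eq,
    not_le] at hb <;> omega

theorem two_pow_labelMistakes_halving_le {S : Finset (List Bool)} {w : List Bool} (hw : w ∈ S) :
    2 ^ labelMistakes (halving S) w ≤ #S := by
  induction w generalizing S with
  | nil => simpa [labelMistakes] using card_pos.mpr ⟨_, hw⟩
  | cons b w ih =>
    have hfollow : w ∈ follow S b := mem_image.mpr ⟨b :: w, mem_filter.mpr ⟨hw, rfl⟩, rfl⟩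
    have ih' : 2 ^ labelMistakes (fun l => halving S (b :: l)) w ≤ #(follow S b) := ih hfollow
    by_cases hb : halving S [] = b
    · simp only [labelMistakes, hb, if_true, zero_add]
      exact ih'.trans (card_image_le.trans (card_filter_le _ _))
    · simp only [labelMistakes, hb, if_false, pow_add, pow_one]
      exact (Nat.mul_le_mul_left 2 ih').trans (two_mul_card_follow_le hb)

end Halving

section Traces

open Finset

variable {X : Type*} {H : Set (X → Bool)}

noncomputable def traces (H : Set (X → Bool)) (P : Finset X) : Finset (Finset X) :=
  P.powerset.filter fun t => ∃ h ∈ H, P.filter (fun a => h a = true) = t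

theorem shatters_of_shatters_traces {P s : Finset X} (hs : (traces H P).Shatters s) :
    Shatters H s := by
  intro f
  obtain ⟨u, hu, hsu⟩ := hs.exists_superset
  have hsP : s ⊆ P := hsu.trans (mem_powerset.mp (mem_filter.mp hu).1)
  obtain ⟨t, ht, hst⟩ := hs (filter_subset (fun a => f a = true) s)
  obtain ⟨h, hh, rfl⟩ := (mem_filter.mp ht).2
  refine ⟨h, hh, fun a ha => Bool.eq_iff_iff.mpr ?_⟩
  have := congrArg (a ∈ ·) hst
  simp only [mem_inter, mem_filter, ha, hsP ha, true_and, eq_iff_iff] at this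
  exact this

theorem sum_range_choose_le_pow (n v : ℕ) : ∑ k ∈ range (v + 1), n.choose k ≤ (n + 1) ^ v := by
  rw [add_pow]
  refine sum_le_sum fun k hk => ?_
  rw [one_pow, mul_one]
  exact (Nat.choose_le_pow n k).trans
    (Nat.le_mul_of_pos_right _ (Nat.choose_pos (Nat.lt_succ_iff.mp (mem_range.mp hk))))

theorem card_traces_le {v : ℕ} (hVC : ∀ s, Shatters H s → s.card ≤ v) (P : Finset X) :
    #(traces H P) ≤ (#P + 1) ^ v := by
  have hsub : (traces H P).shatterer ⊆ (range (v + 1)).biUnion fun k => P.powersetCard k := by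
    intro s hs
    have hs := mem_shatterer.mp hs
    obtain ⟨u, hu, hsu⟩ := hs.exists_superset
    refine mem_biUnion.mpr ⟨#s, mem_range.mpr (Nat.lt_succ_of_le
      (hVC s (shatters_of_shatters_traces hs))), mem_powersetCard.mpr ⟨?_, rfl⟩⟩
    exact hsu.trans (mem_powerset.mp (mem_filter.mp hu).1)
  calc #(traces H P) ≤ #(traces H P).shatterer := card_le_card_shatterer _
    _ ≤ ∑ k ∈ range (v + 1), #(P.powersetCard k) := (card_le_card hsub).trans card_biUnion_le
    _ = ∑ k ∈ range (v + 1), (#P).choose k := by simp only [card_powersetCard]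
    _ ≤ (#P + 1) ^ v := sum_range_choose_le_pow _ _

noncomputable def labelSequences {n : ℕ} (H : Set (X → Bool)) (x : Fin n → X) :
    Finset (List Bool) :=
  (traces H (univ.image x)).image fun t => List.ofFn fun i => decide (x i ∈ t)

theorem ofFn_mem_labelSequences {n : ℕ} (x : Fin n → X) {h : X → Bool} (hh : h ∈ H) :
    (List.ofFn fun i => h (x i)) ∈ labelSequences H x := by
  refine mem_image.mpr ⟨(univ.image x).filter fun a => h a = true,
    mem_filter.mpr ⟨mem_powerset.mpr (filter_subset _ _), h, hh, rfl⟩, ?_⟩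
  simp

theorem card_labelSequences_le {v : ℕ} (hVC : ∀ s, Shatters H s → s.card ≤ v) {n : ℕ}
    (x : Fin n → X) : #(labelSequences H x) ≤ (n + 1) ^ v :=
  card_image_le.trans <| (card_traces_le hVC _).trans <|
    Nat.pow_le_pow_left (Nat.succ_le_succ (card_image_le.trans (by simp))) v

noncomputable def halvingLearner {n : ℕ} (H : Set (X → Bool)) (x : Fin n → X) :
    List Bool → Bool :=
  halving (labelSequences H x)

theorem two_pow_mistakes_halvingLearner_le {v : ℕ} (hVC : ∀ s, Shatters H s → s.card ≤ v)
    {n : ℕ} (x : Fin n → X) {h : X → Bool} (hh : h ∈ H) :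
    2 ^ mistakes (halvingLearner H) x h ≤ (n + 1) ^ v := by
  rw [mistakes_eq_labelMistakes]
  exact (two_pow_labelMistakes_halving_le (ofFn_mem_labelSequences x hh)).trans
    (card_labelSequences_le hVC x)

end Traces

section RealBound

theorem natCast_add_one_le_div_add_two_pow (n : ℕ) {v : ℕ} (hv : v ≠ 0) :
    (n : ℝ) + 1 ≤ ((n : ℝ) / v + 2) ^ v := by
  have hbern := one_add_mul_le_pow (a := (n : ℝ) / v + 1)
    (by linarith [show (0 : ℝ) ≤ n / v by positivity]) v
  calc (n : ℝ) + 1 ≤ 1 + v * ((n : ℝ) / v + 1) := by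
        rw [mul_add, mul_div_cancel₀ _ (Nat.cast_ne_zero.mpr hv)]
        linarith [(v.cast_nonneg : (0 : ℝ) ≤ v)]
    _ ≤ ((n : ℝ) / v + 2) ^ v := by
        rwa [show (1 : ℝ) + (n / v + 1) = n / v + 2 by ring] at hbern

theorem natCast_le_of_two_pow_le {M n v : ℕ} (h : 2 ^ M ≤ (n + 1) ^ v) :
    (M : ℝ) ≤ (v + 1) / Real.log 2 * v * Real.log ((n : ℝ) / v + 2) := by
  have hlog2 : 0 < Real.log 2 := Real.log_pos one_lt_two
  have hL : 0 ≤ Real.log ((n : ℝ) / v + 2) :=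
    Real.log_nonneg (by linarith [show (0 : ℝ) ≤ n / v by positivity])
  have h₁ : (M : ℝ) * Real.log 2 ≤ v * Real.log (n + 1) := by
    have := Real.log_le_log (by positivity)
      (show (2 : ℝ) ^ M ≤ ((n : ℝ) + 1) ^ v by exact_mod_cast h)
    rwa [Real.log_pow, Real.log_pow] at this
  have h₂ : (v : ℝ) * Real.log (n + 1) ≤ v * (v * Real.log ((n : ℝ) / v + 2)) := by
    rcases eq_or_ne v 0 with rfl | hv
    · simp
    gcongr
    rw [← Real.log_pow]
    exact Real.log_le_log (by positivity) (natCast_add_one_le_div_add_two_pow n hv)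
  rw [div_mul_eq_mul_div, div_mul_eq_mul_div, le_div_iff₀ hlog2]
  nlinarith [mul_nonneg (v.cast_nonneg : (0 : ℝ) ≤ v) hL]

end RealBound

/-- The middle case of the trichotomy: if `VC(H) = v < ∞` and `LD(H) = ∞`, then for every
`n ≤ |X|` the adversary can force `max(min(v,n), ⌊log₂ n⌋)` mistakes, and there is a
constant `C` (depending only on `H`) such that the learner can guarantee at most
`C·v·log(n/v + 2) = O(v·log(n/v))` mistakes; in particular `M(H,n) = Θ(log n)` for
fixed `H`. -/
theorem trichotomy_middle_case {X : Type*} (H : Set (X → Bool)) (v : ℕ)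
    (hVC : VCdim H = (v : ℕ∞)) (hLD : Ldim H = ⊤) :
    (∀ n : ℕ, (∃ s : Finset X, s.card = n) →
      ∀ A : (Fin n → X) → List Bool → Bool,
        ∃ x : Fin n → X, ∃ h ∈ H,
          max (min v n) (Nat.log 2 n) ≤ mistakes A x h) ∧
    (∃ C : ℝ, 0 < C ∧ ∀ n : ℕ, 1 ≤ n →
      ∃ A : (Fin n → X) → List Bool → Bool,
        ∀ x : Fin n → X, ∀ h ∈ H,
          (mistakes A x h : ℝ) ≤ C * v * Real.log ((n : ℝ) / v + 2)) := by
  obtain ⟨x₀, hx₀⟩ := exists_shattersTree_of_ldim_eq_top hLD 0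
  have : Nonempty X := ⟨x₀ []⟩
  refine ⟨fun n _ A => ?_, ⟨(v + 1) / Real.log 2, by positivity, fun n _ => ⟨halvingLearner H,
    fun x h hh => natCast_le_of_two_pow_le
      (two_pow_mistakes_halvingLearner_le (fun _ => card_le_of_shatters hVC) x hh)⟩⟩⟩
  obtain ⟨zs₁, hlen₁, hF₁⟩ := exists_forces_min hVC (ShattersTree.zero_iff.mp hx₀) n
  obtain ⟨zs₂, hlen₂, hF₂⟩ := exists_forces_log hLD n
  rcases max_choice (min v n) (Nat.log 2 n) with hmax | hmax <;> rw [hmax]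
  exacts [hF₁.exists_le_mistakes hlen₁ A, hF₂.exists_le_mistakes hlen₂ A]
end

section
/- In the transductive online game on threshold functions presented in dyadic order, at every dyadic level the adversary can force a mistake: formally, for the class H_N = {h_1,...,h_{N-1}} on domain {x_1,...,x_{N-1}} with h_i(x_j) = 1 iff j ≤ i and N = 2^k, if the instances are presented in the dyadic order x_{N/2}, x_{N/4}, x_{3N/4}, x_{N/8}, ..., then the adversary can force k mistakes while keeping all chosen labels H_N-realizable. -/
open scoped Classical

/-- The dyadic enumeration of `{1, …, N-1}` for `N = 2^k`: position `t` (0-indexed) holds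
`(2j+1)·N/2^{i+1}` where `t+1 = 2^i + j` with `0 ≤ j < 2^i`; i.e. the sequence
`N/2, N/4, 3N/4, N/8, 3N/8, 5N/8, 7N/8, …`. -/
def dyadicSeq (k : ℕ) (t : Fin (2 ^ k - 1)) : ℕ :=
  (2 * ((t.1 + 1) - 2 ^ (Nat.log 2 (t.1 + 1))) + 1) * 2 ^ (k - Nat.log 2 (t.1 + 1) - 1)

/-!
The adversary runs a binary search. Before level `j` the thresholds still compatible with all
answers form the block `[m·2^(k-j), (m+1)·2^(k-j))`, and the point of level `j` presented
there is its midpoint `(2m+1)·2^(k-j-1)`: both halves survive whichever label is given, so the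
adversary answers the opposite of the prediction and keeps the half this label selects. All
earlier points of the dyadic order are multiples of `2^(k-j)` or lie below the block, so every
threshold of the block labels them alike; hence the final threshold reproduces the history
seen at each level, and the learner errs once per level.
-/

theorem le_mistakes_of_injective {X Y : Type*} {n m : ℕ} {A : (Fin n → X) → List Y → Y}
    {x : Fin n → X} {h : X → Y} (g : Fin m → Fin n) (hg : Function.Injective g)
    (hmiss : ∀ j, A x (List.ofFn fun i : Fin (g j).1 => h (x ⟨i.1, i.2.trans (g j).2⟩)) ≠
      h (x (g j))) :
    m ≤ mistakes A x h := by
  rw [← Finset.card_fin m]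
  exact Finset.card_le_card_of_injOn g
    (fun j _ => Finset.mem_filter.mpr ⟨Finset.mem_univ _, hmiss j⟩) hg.injOn

theorem decide_le_eq_of_notMem_Ioo {α : Type*} [LinearOrder α] {v lo hi T T' : α}
    (hv : v ∉ Set.Ioo lo hi) (hT : T ∈ Set.Ico lo hi) (hT' : T' ∈ Set.Ico lo hi) :
    decide (v ≤ T) = decide (v ≤ T') := by
  rw [decide_eq_decide]
  simp only [Set.mem_Ioo, not_and_or, not_lt] at hv
  rcases hv with hv | hv
  · exact iff_of_true (hv.trans hT.1) (hv.trans hT'.1)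
  · exact iff_of_false (hT.2.trans_le hv).not_ge (hT'.2.trans_le hv).not_ge

theorem mul_notMem_Ioo_mul (d m P : ℕ) : d * P ∉ Set.Ioo (m * P) ((m + 1) * P) := by
  rintro ⟨hlo, hhi⟩
  have := Nat.lt_of_mul_lt_mul_right hlo
  have := Nat.lt_of_mul_lt_mul_right hhi
  omega

def binaryPrefix (f : ℕ → ℕ → Bool) : ℕ → ℕ
  | 0 => 0
  | j + 1 => 2 * binaryPrefix f j + (f j (binaryPrefix f j)).toNat

namespace binaryPrefix

variable (f : ℕ → ℕ → Bool)

theorem lt_two_pow (j : ℕ) : binaryPrefix f j < 2 ^ j := by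
  induction j with
  | zero => simp [binaryPrefix]
  | succ j ih =>
    have := Bool.toNat_le (f j (binaryPrefix f j))
    rw [binaryPrefix, pow_succ]
    omega

theorem add_div_two_pow (j n : ℕ) : binaryPrefix f (j + n) / 2 ^ n = binaryPrefix f j := by
  induction n with
  | zero => simp
  | succ n ih =>
    have := Bool.toNat_le (f (j + n) (binaryPrefix f (j + n)))
    rw [← add_assoc, binaryPrefix, pow_succ', ← Nat.div_div_eq_div_mul, ← ih]
    congr 1
    omega

theorem mem_Ico {j k : ℕ} (hjk : j ≤ k) :
    binaryPrefix f k ∈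
      Set.Ico (binaryPrefix f j * 2 ^ (k - j)) ((binaryPrefix f j + 1) * 2 ^ (k - j)) := by
  have hdiv := add_div_two_pow f j (k - j)
  rw [Nat.add_sub_cancel' hjk] at hdiv
  rw [← hdiv]
  exact ⟨Nat.div_mul_le_self _ _, by rw [add_one_mul]; exact Nat.lt_div_mul_add (by positivity)⟩

theorem bit_eq_decide {j k : ℕ} (hjk : j < k) :
    f j (binaryPrefix f j) =
      decide ((2 * binaryPrefix f j + 1) * 2 ^ (k - j - 1) ≤ binaryPrefix f k) := by
  obtain ⟨hlo, hhi⟩ := mem_Ico f (Nat.succ_le_of_lt hjk)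
  rw [binaryPrefix, Nat.sub_succ'] at hlo hhi
  cases hb : f j (binaryPrefix f j)
  · simp only [hb, Bool.toNat_false, add_zero] at hhi
    exact (decide_eq_false (not_le.mpr hhi)).symm
  · simp only [hb, Bool.toNat_true] at hlo
    exact (decide_eq_true hlo).symm

end binaryPrefix

def dyadicNat (k t : ℕ) : ℕ :=
  (2 * ((t + 1) - 2 ^ (Nat.log 2 (t + 1))) + 1) * 2 ^ (k - Nat.log 2 (t + 1) - 1)

theorem exists_dyadic_level (t : ℕ) : ∃ l c, c < 2 ^ l ∧ t = 2 ^ l - 1 + c := by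
  have h1 := Nat.pow_log_le_self 2 (x := t + 1) (by omega)
  have h2 := Nat.lt_pow_succ_log_self (b := 2) (by norm_num) (t + 1)
  rw [pow_succ] at h2
  exact ⟨Nat.log 2 (t + 1), t + 1 - 2 ^ Nat.log 2 (t + 1), by omega, by omega⟩

theorem dyadicNat_level (k : ℕ) {l c : ℕ} (hc : c < 2 ^ l) :
    dyadicNat k (2 ^ l - 1 + c) = (2 * c + 1) * 2 ^ (k - l - 1) := by
  have hpos := Nat.one_le_two_pow (n := l)
  have hlog : Nat.log 2 (2 ^ l - 1 + c + 1) = l :=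
    Nat.log_eq_of_pow_le_of_lt_pow (by omega) (by rw [pow_succ]; omega)
  rw [dyadicNat, hlog]
  congr 3
  omega

theorem strictMono_two_pow_sub_one_add {m : ℕ → ℕ} (hm : ∀ j, m j < 2 ^ j) :
    StrictMono fun j => 2 ^ j - 1 + m j :=
  strictMono_nat_of_lt_succ fun j => by
    have := hm j
    rw [pow_succ]
    omega

theorem dyadic_index_lt {j k m : ℕ} (hm : m < 2 ^ j) (hjk : j < k) :
    2 ^ j - 1 + m < 2 ^ k - 1 := by
  have := Nat.pow_le_pow_right (n := 2) (by norm_num) hjk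
  rw [pow_succ] at this
  omega

theorem dyadicNat_notMem_Ioo {j k m t : ℕ} (hm : m < 2 ^ j) (hjk : j < k)
    (ht : t < 2 ^ j - 1 + m) :
    dyadicNat k t ∉ Set.Ioo (m * 2 ^ (k - j)) ((m + 1) * 2 ^ (k - j)) := by
  obtain ⟨l, c, hc, rfl⟩ := exists_dyadic_level t
  rw [dyadicNat_level k hc]
  rcases lt_trichotomy l j with hlj | rfl | hlj
  · have hsplit : (2 * c + 1) * 2 ^ (k - l - 1) = (2 * c + 1) * 2 ^ (j - l - 1) * 2 ^ (k - j) := by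
      rw [mul_assoc, ← pow_add]
      congr 2
      omega
    rw [hsplit]
    exact mul_notMem_Ioo_mul _ _ _
  · have hhalf : 2 ^ (k - l) = 2 * 2 ^ (k - l - 1) := by
      rw [← pow_succ']
      congr 1
      omega
    rintro ⟨hlo, -⟩
    rw [hhalf, ← mul_assoc] at hlo
    have := Nat.lt_of_mul_lt_mul_right hlo
    omega
  · have := Nat.pow_le_pow_right (n := 2) (by norm_num) hlj
    rw [pow_succ] at this
    omega

/-- Labelling the history by the block's lowest threshold `m·2^(k-j)` loses nothing: every
threshold of the block labels it alike (`dyadicNat_notMem_Ioo`). -/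
def adversaryBit (k : ℕ) (A : (Fin (2 ^ k - 1) → ℕ) → List Bool → Bool) (j m : ℕ) :
    Bool :=
  !A (dyadicSeq k)
    (List.ofFn fun t : Fin (2 ^ j - 1 + m) => decide (dyadicNat k t ≤ m * 2 ^ (k - j)))

theorem dyadic_threshold_lower_bound_general (k : ℕ) :
    ∀ A : (Fin (2 ^ k - 1) → ℕ) → List Bool → Bool,
      ∃ h ∈ {h : ℕ → Bool | ∃ i : ℕ, i ≤ 2 ^ k - 1 ∧
              h = fun m : ℕ => decide (m ≤ i)},
        k ≤ mistakes A (dyadicSeq k) h := by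
  intro A
  set m := binaryPrefix (adversaryBit k A)
  have hm : ∀ j, m j < 2 ^ j := binaryPrefix.lt_two_pow _
  refine ⟨fun v => decide (v ≤ m k), ⟨m k, by have := hm k; omega, rfl⟩, ?_⟩
  refine le_mistakes_of_injective (fun j => ⟨2 ^ j.1 - 1 + m j, dyadic_index_lt (hm j) j.2⟩)
    (fun a b hab => Fin.ext ((strictMono_two_pow_sub_one_add hm).injective (congrArg Fin.val hab)))
    fun j => ?_
  have hhistory : (List.ofFn fun t : Fin (2 ^ j.1 - 1 + m j) => decide (dyadicNat k t ≤ m k)) =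
      List.ofFn fun t : Fin (2 ^ j.1 - 1 + m j) =>
        decide (dyadicNat k t ≤ m j * 2 ^ (k - j)) := by
    refine congrArg List.ofFn (funext fun t => decide_le_eq_of_notMem_Ioo
      (dyadicNat_notMem_Ioo (hm j) j.2 t.2) (binaryPrefix.mem_Ico _ j.2.le) ?_)
    exact Set.left_mem_Ico.mpr (Nat.mul_lt_mul_of_pos_right (Nat.lt_succ_self _) (by positivity))
  have hlabel : decide (dyadicNat k (2 ^ j.1 - 1 + m j) ≤ m k) = adversaryBit k A j (m j) := by
    rw [dyadicNat_level k (hm j)]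
    exact (binaryPrefix.bit_eq_decide _ j.2).symm
  change A (dyadicSeq k)
      (List.ofFn fun t : Fin (2 ^ j.1 - 1 + m j) => decide (dyadicNat k t ≤ m k)) ≠
    decide (dyadicNat k (2 ^ j.1 - 1 + m j) ≤ m k)
  rw [hhistory, hlabel, adversaryBit]
  exact (Bool.not_ne_self _).symm

/-- On the class of thresholds `h_i(m) = 1 ↔ m ≤ i` (`0 ≤ i ≤ N-1`, `N = 2^k`) over the
points `1, …, N-1` presented in dyadic order, the adversary can force a mistake at every
dyadic level: `k` mistakes in total, with all chosen labels realizable by some threshold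
in the class (labels are generated by an actual threshold `h ∈ H_N`). -/
theorem dyadic_threshold_lower_bound (k : ℕ) (hk : 1 ≤ k) :
    ∀ A : (Fin (2 ^ k - 1) → ℕ) → List Bool → Bool,
      ∃ h ∈ {h : ℕ → Bool | ∃ i : ℕ, i ≤ 2 ^ k - 1 ∧
              h = fun m : ℕ => decide (m ≤ i)},
        k ≤ mistakes A (dyadicSeq k) h :=
  dyadic_threshold_lower_bound_general k
end
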